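/- arXiv:1510.03045 — 2 statements merged into one kernel-verified Lean document; each statement's English description precedes it below -/
import Mathlib

section
/- Let n = 2 and d ≥ 2, and let g be a strategy satisfying Property 2. Then Value(g) = (d + (d−1)·d/2) / d², i.e., Value(g) = (d + 1) / (2d). -/
/-! With two columns, Property 2 leaves an injective column, which is then onto `Fin d`. So every
word agrees with some row in at least one position, and the `d` rows are pairwise distinct: a word
scores `2` if it is a row and `1` otherwise, for a total of `d ^ 2 + d` over all `d ^ 2` words. -/

open Finset

/-- Similarity: number of positions where two strings agree. -/
def Sim (n d : ℕ) (z x : Fin n → Fin d) : ℕ :=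
  (Finset.univ.filter fun j => z j = x j).card

/-- Best approximation of a word `x` by the rows of strategy `g`. -/
def maxSim (n d : ℕ) (g : Fin d → Fin n → Fin d) (x : Fin n → Fin d) : ℕ :=
  Finset.univ.sup fun y => Sim n d (g y) x

/-- Value (average success probability) of a strategy, assuming Alice's
optimal encoding. -/
def Value (n d : ℕ) (g : Fin d → Fin n → Fin d) : ℚ :=
  (∑ x : Fin n → Fin d, (maxSim n d g x : ℚ)) / (n * d ^ n)

/-- A strategy is optimal if no strategy has a larger value. -/
def IsOptimal (n d : ℕ) (g : Fin d → Fin n → Fin d) : Prop :=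
  ∀ f : Fin d → Fin n → Fin d, Value n d f ≤ Value n d g

/-- Property 1: every column of the decoding matrix is injective. -/
def Property1 (n d : ℕ) (g : Fin d → Fin n → Fin d) : Prop :=
  ∀ j : Fin n, Function.Injective fun y => g y j

/-- Property 2: at most one column of the decoding matrix fails to be injective. -/
def Property2 (n d : ℕ) (g : Fin d → Fin n → Fin d) : Prop :=
  ∀ j₁ j₂ : Fin n, ¬ Function.Injective (fun y => g y j₁) →
    ¬ Function.Injective (fun y => g y j₂) → j₁ = j₂

section Similarity

variable {n d : ℕ}

theorem Sim_le (z x : Fin n → Fin d) : Sim n d z x ≤ n :=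
  (card_filter_le _ _).trans_eq (card_fin n)

theorem Sim_eq_iff {z x : Fin n → Fin d} : Sim n d z x = n ↔ z = x := by
  have h := card_filter_eq_iff (s := univ) (p := fun j => z j = x j)
  rw [card_fin] at h
  simpa [Sim, funext_iff] using h

theorem maxSim_le (g : Fin d → Fin n → Fin d) (x : Fin n → Fin d) : maxSim n d g x ≤ n :=
  Finset.sup_le fun y _ => Sim_le (g y) x

theorem maxSim_eq_of_mem_range {g : Fin d → Fin n → Fin d} {x : Fin n → Fin d}
    (hx : x ∈ Set.range g) : maxSim n d g x = n := by
  obtain ⟨y, rfl⟩ := hx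
  refine (maxSim_le g _).antisymm ?_
  calc n = Sim n d (g y) (g y) := (Sim_eq_iff.mpr rfl).symm
    _ ≤ maxSim n d g (g y) := le_sup (f := fun y' => Sim n d (g y') (g y)) (mem_univ y)

theorem maxSim_lt_of_notMem_range (hn : 0 < n) {g : Fin d → Fin n → Fin d}
    {x : Fin n → Fin d} (hx : x ∉ Set.range g) : maxSim n d g x < n :=
  (Finset.sup_lt_iff hn).mpr fun y _ =>
    (Sim_le (g y) x).lt_of_ne fun h => hx ⟨y, Sim_eq_iff.mp h⟩

theorem one_le_maxSim_of_surjective {g : Fin d → Fin n → Fin d} {j : Fin n}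
    (hj : Function.Surjective fun y => g y j) (x : Fin n → Fin d) : 1 ≤ maxSim n d g x := by
  obtain ⟨y, hy⟩ := hj (x j)
  have hpos : 0 < Sim n d (g y) x := card_pos.mpr ⟨j, mem_filter.mpr ⟨mem_univ j, hy⟩⟩
  exact hpos.trans_le (le_sup (f := fun y' => Sim n d (g y') x) (mem_univ y))

end Similarity

theorem Property2.exists_injective {n d : ℕ} (hn : 2 ≤ n) {g : Fin d → Fin n → Fin d}
    (hp : Property2 n d g) : ∃ j : Fin n, Function.Injective fun y => g y j := by
  by_contra! h
  have := hp ⟨0, by omega⟩ ⟨1, by omega⟩ (h _) (h _)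
  simp [Fin.ext_iff] at this

theorem maxSim_two_eq {d : ℕ} {g : Fin d → Fin 2 → Fin d} {j : Fin 2}
    (hj : Function.Surjective fun y => g y j) (x : Fin 2 → Fin d) :
    maxSim 2 d g x = 1 + if x ∈ univ.image g then 1 else 0 := by
  have h1 := one_le_maxSim_of_surjective hj x
  split_ifs with hx
  · exact maxSim_eq_of_mem_range (by simpa using hx)
  · have := maxSim_lt_of_notMem_range two_pos (g := g) (x := x) (by simpa using hx)
    omega

theorem sum_maxSim_two {d : ℕ} {g : Fin d → Fin 2 → Fin d} {j : Fin 2}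
    (hj : Function.Injective fun y => g y j) :
    ∑ x, maxSim 2 d g x = d ^ 2 + d := by
  have hrows : Function.Injective g := fun a b h => hj (congrFun h j)
  rw [sum_congr rfl fun x _ => maxSim_two_eq (Finite.injective_iff_surjective.mp hj) x,
    sum_add_distrib, sum_boole, filter_mem_eq_inter, univ_inter,
    card_image_of_injective _ hrows]
  simp

theorem stmt_10_general (d : ℕ)
    (g : Fin d → Fin 2 → Fin d) (hp : Property2 2 d g) :
    Value 2 d g = ((d : ℚ) + 1) / (2 * d) := by
  obtain ⟨j, hj⟩ := hp.exists_injective le_rfl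
  rw [Value, ← Nat.cast_sum, sum_maxSim_two hj]
  rcases eq_or_ne (d : ℚ) 0 with hd | hd
  · -- both sides are `0 / 0`
    simp [hd]
  · push_cast
    field_simp

/-- for `n = 2`, any strategy with Property 2 has value
`(d + (d-1)d/2)/d² = (d+1)/(2d)`. -/
theorem stmt_10 (d : ℕ) (hd : 2 ≤ d)
    (g : Fin d → Fin 2 → Fin d) (hp : Property2 2 d g) :
    Value 2 d g = ((d : ℚ) + 1) / (2 * d) :=
  stmt_10_general d g hp
end

section
/- Let d = 2 and let n > 2 be even, and let f be a strategy (over the binary alphabet Fin 2) that does not satisfy Property 2, i.e., there exist two distinct indices j₁ ≠ j₂ at which the maps y ↦ f y j₁ and y ↦ f y j₂ fail to be injective. Then there exists a word x : Fin n → Fin 2 such that max over y of Sim(f y, x) < n/2, i.e., max over y of Sim(f y, x) ≤ n/2 − 1. -/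
/-! Over the binary alphabet a column is non-injective exactly when the two rows agree there, so
two such columns leave the rows differing in at most `n - 2` positions. A word that agrees with
the first row on half of these positions, with the second row on the other half, and with neither
elsewhere has similarity at most `⌈(n - 2) / 2⌉ = n / 2 - 1` with both rows. -/

open Finset

theorem Fin.injective_fin_two_iff {α : Type*} {v : Fin 2 → α} :
    Function.Injective v ↔ v 0 ≠ v 1 := by
  refine ⟨fun h => h.ne Fin.zero_ne_one, fun h a b hab => ?_⟩
  fin_cases a <;> fin_cases b <;> simp_all [eq_comm]

theorem Fin.fin_two_eq_add_one_iff_ne : ∀ a b : Fin 2, a = b + 1 ↔ a ≠ b := by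
  decide

theorem hammingDist_le_card_sub {ι β : Type*} [Fintype ι] [DecidableEq ι] [DecidableEq β]
    {x y : ι → β} (s : Finset ι) (h : ∀ i ∈ s, x i = y i) :
    hammingDist x y ≤ Fintype.card ι - #s := by
  rw [← card_compl]
  refine card_le_card fun i hi => mem_compl.2 fun his => ?_
  exact (mem_filter.1 hi).2 (h i his)

theorem maxSim_fin_two (n : ℕ) (g : Fin 2 → Fin n → Fin 2) (x : Fin n → Fin 2) :
    maxSim n 2 g x = max (Sim n 2 (g 0) x) (Sim n 2 (g 1) x) := by
  simp [maxSim, Fin.univ_succ]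

/- Flip `z₁` on half `S` of the positions `D` where the two words differ and flip `z₀` everywhere
else: then `x` agrees with `z₀` exactly on `S` and with `z₁` exactly on `D \ S`. -/
theorem exists_sim_le_half_hammingDist {n : ℕ} (z₀ z₁ : Fin n → Fin 2) :
    ∃ x : Fin n → Fin 2, Sim n 2 z₀ x ≤ (hammingDist z₀ z₁ + 1) / 2 ∧
      Sim n 2 z₁ x ≤ (hammingDist z₀ z₁ + 1) / 2 := by
  set D : Finset (Fin n) := {j | z₀ j ≠ z₁ j}
  obtain ⟨S, hSD, hS⟩ := exists_subset_card_eq (Nat.div_le_self #D 2)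
  let x : Fin n → Fin 2 := fun j => if j ∈ S then z₁ j + 1 else z₀ j + 1
  have sim₀ : Sim n 2 z₀ x = #S := by
    refine congrArg card (ext fun j => ?_)
    by_cases h : j ∈ S
    · simpa [x, h, Fin.fin_two_eq_add_one_iff_ne] using (mem_filter.1 (hSD h)).2
    · simp [x, h]
  have sim₁ : Sim n 2 z₁ x = #(D \ S) := by
    refine congrArg card (ext fun j => ?_)
    by_cases h : j ∈ S <;> simp [x, D, h, Fin.fin_two_eq_add_one_iff_ne, eq_comm]
  have hD : hammingDist z₀ z₁ = #D := rfl
  refine ⟨x, ?_, ?_⟩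
  · rw [sim₀, hS, hD]; omega
  · rw [sim₁, card_sdiff_of_subset hSD, hS, hD]; omega

theorem stmt_14_general (n : ℕ) (hne : Even n)
    (f : Fin 2 → Fin n → Fin 2) (hp : ¬ Property2 n 2 f) :
    ∃ x : Fin n → Fin 2, maxSim n 2 f x < n / 2 := by
  obtain ⟨j₁, j₂, h₁, h₂, hj⟩ : ∃ j₁ j₂, f 0 j₁ = f 1 j₁ ∧ f 0 j₂ = f 1 j₂ ∧ j₁ ≠ j₂ := by
    simpa [Property2, Fin.injective_fin_two_iff] using hp
  have hdist : hammingDist (f 0) (f 1) ≤ n - 2 := by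
    simpa [card_pair hj] using hammingDist_le_card_sub {j₁, j₂} (by simp [h₁, h₂])
  have hn : 2 ≤ n := by simpa [card_pair hj] using card_le_univ {j₁, j₂}
  obtain ⟨x, hx₀, hx₁⟩ := exists_sim_le_half_hammingDist (f 0) (f 1)
  refine ⟨x, ?_⟩
  obtain ⟨k, rfl⟩ := hne
  rw [maxSim_fin_two, max_lt_iff]
  omega

/-- for `d = 2` and even `n > 2`, if a strategy fails Property 2,
then some word is approximated with similarity strictly below `n/2`. -/
theorem stmt_14 (n : ℕ) (hn : 2 < n) (hne : Even n)
    (f : Fin 2 → Fin n → Fin 2) (hp : ¬ Property2 n 2 f) :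
    ∃ x : Fin n → Fin 2, maxSim n 2 f x < n / 2 :=
  stmt_14_general n hne f hp
end
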